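/- For every integer n ≥ 1, the number of permutations π of the box {0,…,n−1}² ⊆ ℤ² such that π(x) − x ∈ {(1,0),(−1,0),(0,1),(0,−1)} for all x in the box equals the square of the number of perfect matchings of the n×n grid graph, i.e., the simple graph on {0,…,n−1}² in which x is adjacent to y if and only if |x₁ − y₁| + |x₂ − y₂| = 1. -/

import Mathlib

/-- A perfect matching of a simple undirected graph: a set of edges of the graph
such that every vertex belongs to exactly one edge of the set. -/
def IsPerfectMatching {W : Type*} (G : SimpleGraph W) (M : Set (Sym2 W)) : Prop :=
  M ⊆ G.edgeSet ∧ ∀ v : W, ∃! e, e ∈ M ∧ v ∈ e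

/-- The restricting set `A_+ = {(1,0),(−1,0),(0,1),(0,−1)} ⊆ ℤ²`. -/
def A_plus : Set (ℤ × ℤ) := {(1, 0), (-1, 0), (0, 1), (0, -1)}

/-- The box `{0,…,n₁−1} × {0,…,n₂−1} ⊆ ℤ²`. -/
def box2 (n₁ n₂ : ℕ) : Set (ℤ × ℤ) :=
  {x | 0 ≤ x.1 ∧ x.1 < (n₁ : ℤ) ∧ 0 ≤ x.2 ∧ x.2 < (n₂ : ℤ)}

/-- `Π(n)`: the number of permutations `π` of the box `{0,…,n−1}²` with
`π x − x ∈ A_+` for all `x` in the box. -/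
noncomputable def Piplus (n : ℕ) : ℕ :=
  Set.ncard {g : Equiv.Perm ↥(box2 n n) |
    ∀ x : ↥(box2 n n), (g x).val - x.val ∈ A_plus}

/-! Fix a 2-colouring of a bipartite graph. If a permutation `σ` moves every vertex to a
neighbour, the edges `{x, σ x}` with `x` black form a perfect matching, and so do those with `x`
white, since `σ` swaps the colour classes. Conversely two perfect matchings `M_black`, `M_white`
give back `σ`: send `v` to its partner in the matching of `v`'s colour (the inverse uses the
other matching). So the permutations are counted by pairs of perfect matchings. The grid is
bipartite under the parity of `x₁ + x₂`, and its adjacency is exactly `y - x ∈ A_+`. -/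

section PerfectMatching

variable {V : Type*} {G : SimpleGraph V} {M : Set (Sym2 V)}

theorem isPerfectMatching_of_mk_mem_iff (hMG : M ⊆ G.edgeSet) (f : V → V)
    (hf : ∀ v w, s(v, w) ∈ M ↔ f v = w) : IsPerfectMatching G M := by
  refine ⟨hMG, fun v => ⟨s(v, f v), ⟨(hf v _).2 rfl, Sym2.mem_mk_left v _⟩, ?_⟩⟩
  rintro e ⟨he, hve⟩
  obtain ⟨w, rfl⟩ := Sym2.mem_iff_exists.1 hve
  rw [(hf v w).1 he]

namespace IsPerfectMatching

variable (hM : IsPerfectMatching G M)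
include hM

noncomputable def partner (v : V) : V :=
  Sym2.Mem.other (hM.2 v).choose_spec.1.2

theorem partner_eq_iff {v w : V} : hM.partner v = w ↔ s(v, w) ∈ M := by
  have hedge : s(v, hM.partner v) = (hM.2 v).choose := Sym2.other_spec _
  constructor
  · rintro rfl
    exact hedge ▸ (hM.2 v).choose_spec.1.1
  · intro h
    have := (hM.2 v).choose_spec.2 _ ⟨h, Sym2.mem_mk_left v w⟩
    exact Sym2.congr_right.1 (hedge.trans this.symm)

theorem mk_partner_mem (v : V) : s(v, hM.partner v) ∈ M :=
  hM.partner_eq_iff.1 rfl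

theorem adj_partner (v : V) : G.Adj v (hM.partner v) :=
  hM.1 (hM.mk_partner_mem v)

theorem partner_partner (v : V) : hM.partner (hM.partner v) = v :=
  hM.partner_eq_iff.2 (Sym2.eq_swap ▸ hM.mk_partner_mem v)

end IsPerfectMatching

end PerfectMatching

section Bipartite

variable {V : Type*} {G : SimpleGraph V}

theorem SimpleGraph.Coloring.eq_not_of_adj (c : G.Coloring Bool) {v w : V} (h : G.Adj v w) :
    c w = !c v :=
  Bool.eq_not_of_ne (c.valid h).symm

def permMatching (c : G.Coloring Bool) (σ : Equiv.Perm V) (b : Bool) : Set (Sym2 V) :=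
  {e | ∃ x, c x = b ∧ e = s(x, σ x)}

theorem mk_mem_permMatching {c : G.Coloring Bool} {σ : Equiv.Perm V} {b : Bool} {v w : V} :
    s(v, w) ∈ permMatching c σ b ↔ (c v = b ∧ σ v = w) ∨ (c w = b ∧ σ w = v) := by
  simp only [permMatching, Set.mem_ofPred_eq, Sym2.eq_iff]
  constructor
  · rintro ⟨x, hx, ⟨rfl, rfl⟩ | ⟨rfl, rfl⟩⟩
    exacts [.inl ⟨hx, rfl⟩, .inr ⟨hx, rfl⟩]
  · rintro (⟨hv, rfl⟩ | ⟨hw, rfl⟩)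
    exacts [⟨v, hv, .inl ⟨rfl, rfl⟩⟩, ⟨w, hw, .inr ⟨rfl, rfl⟩⟩]

theorem isPerfectMatching_permMatching (c : G.Coloring Bool) {σ : Equiv.Perm V}
    (hσ : ∀ v, G.Adj v (σ v)) (b : Bool) :
    IsPerfectMatching G (permMatching c σ b) := by
  refine isPerfectMatching_of_mk_mem_iff ?_ (fun v => if c v = b then σ v else σ.symm v) ?_
  · rintro _ ⟨x, -, rfl⟩
    exact hσ x
  · intro v w
    have hcolor : ∀ x, c (σ x) = !c x := fun x => c.eq_not_of_adj (hσ x)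
    rw [mk_mem_permMatching]
    by_cases hv : c v = b
    · rw [if_pos hv]
      constructor
      · rintro (⟨-, h⟩ | ⟨hw, rfl⟩)
        · exact h
        · simp [hcolor, hw] at hv
      · exact fun h => .inl ⟨hv, h⟩
    · rw [if_neg hv, Equiv.symm_apply_eq]
      constructor
      · rintro (⟨hv', -⟩ | ⟨-, h⟩)
        · exact absurd hv' hv
        · exact h.symm
      · rintro rfl
        refine .inr ⟨?_, rfl⟩
        simpa [hcolor] using hv

noncomputable def permOfMatchings {M : Bool → Set (Sym2 V)} (c : G.Coloring Bool)
    (hM : ∀ b, IsPerfectMatching G (M b)) : Equiv.Perm V where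
  toFun v := (hM (c v)).partner v
  invFun v := (hM (!c v)).partner v
  left_inv v := by
    have hcolor : (!c ((hM (c v)).partner v)) = c v := by
      rw [c.eq_not_of_adj ((hM _).adj_partner v), Bool.not_not]
    change (hM _).partner _ = v
    rw [hcolor]
    exact (hM _).partner_partner v
  right_inv v := by
    have hcolor : c ((hM (!c v)).partner v) = !c v := c.eq_not_of_adj ((hM _).adj_partner v)
    change (hM _).partner ((hM (!c v)).partner v) = v
    rw [hcolor]
    exact (hM _).partner_partner v

theorem permOfMatchings_apply {c : G.Coloring Bool} {M : Bool → Set (Sym2 V)}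
    (hM : ∀ b, IsPerfectMatching G (M b)) (v : V) :
    permOfMatchings c hM v = (hM (c v)).partner v :=
  rfl

theorem permOfMatchings_permMatching {c : G.Coloring Bool} {σ : Equiv.Perm V}
    (hσ : ∀ v, G.Adj v (σ v)) :
    permOfMatchings c (isPerfectMatching_permMatching c hσ) = σ := by
  ext v
  rw [permOfMatchings_apply, IsPerfectMatching.partner_eq_iff]
  exact mk_mem_permMatching.2 (.inl ⟨rfl, rfl⟩)

theorem permMatching_permOfMatchings {c : G.Coloring Bool} {M : Bool → Set (Sym2 V)}
    (hM : ∀ b, IsPerfectMatching G (M b)) (b : Bool) :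
    permMatching c (permOfMatchings c hM) b = M b := by
  ext e
  induction e using Sym2.ind with
  | _ v w =>
    rw [mk_mem_permMatching, permOfMatchings_apply, permOfMatchings_apply,
      IsPerfectMatching.partner_eq_iff, IsPerfectMatching.partner_eq_iff]
    constructor
    · rintro (⟨rfl, h⟩ | ⟨rfl, h⟩)
      exacts [h, Sym2.eq_swap ▸ h]
    · intro h
      by_cases hv : c v = b
      · exact .inl ⟨hv, hv ▸ h⟩
      · have hw : c w = b := by
          rw [c.eq_not_of_adj ((hM b).1 h : G.Adj v w), Bool.eq_not_of_ne (Ne.symm hv)]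
        exact .inr ⟨hw, hw ▸ Sym2.eq_swap ▸ h⟩

noncomputable def adjPermEquivPerfectMatchings (c : G.Coloring Bool) :
    {σ : Equiv.Perm V | ∀ v, G.Adj v (σ v)} ≃
      (Bool → {M : Set (Sym2 V) | IsPerfectMatching G M}) where
  toFun σ b := ⟨permMatching c σ b, isPerfectMatching_permMatching c σ.2 b⟩
  invFun M := ⟨permOfMatchings c fun b => (M b).2, fun v => (M _).2.adj_partner v⟩
  left_inv σ := Subtype.ext (permOfMatchings_permMatching σ.2)
  right_inv M := funext fun b => Subtype.ext (permMatching_permOfMatchings (fun b => (M b).2) b)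

theorem ncard_adjPerms_eq_ncard_perfectMatchings_sq (c : G.Coloring Bool) :
    {σ : Equiv.Perm V | ∀ v, G.Adj v (σ v)}.ncard =
      {M : Set (Sym2 V) | IsPerfectMatching G M}.ncard ^ 2 := by
  rw [← Nat.card_coe_set_eq, ← Nat.card_coe_set_eq,
    Nat.card_congr (adjPermEquivPerfectMatchings c), Nat.card_fun,
    Nat.card_eq_fintype_card (α := Bool), Fintype.card_bool]

end Bipartite

theorem mem_A_plus_iff {a : ℤ × ℤ} : a ∈ A_plus ↔ |a.1| + |a.2| = 1 := by
  obtain ⟨a₁, a₂⟩ := a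
  simp only [A_plus, Set.mem_insert_iff, Set.mem_singleton_iff, Prod.mk.injEq,
    Int.abs_eq_natAbs]
  omega

section Grid

variable {s : Set (ℤ × ℤ)} {G : SimpleGraph s}
  (hG : ∀ x y : s, G.Adj x y ↔ |x.val.1 - y.val.1| + |x.val.2 - y.val.2| = 1)
include hG

theorem adj_iff_sub_mem_A_plus {x y : s} : G.Adj x y ↔ y.val - x.val ∈ A_plus := by
  rw [hG, mem_A_plus_iff, Prod.fst_sub, Prod.snd_sub, abs_sub_comm y.val.1, abs_sub_comm y.val.2]

def parityColoring : G.Coloring Bool :=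
  SimpleGraph.Coloring.mk (fun x => decide ((x.val.1 + x.val.2) % 2 = 0)) fun {x y} h => by
    rw [hG, Int.abs_eq_natAbs, Int.abs_eq_natAbs] at h
    simp only [ne_eq, decide_eq_decide]
    omega

end Grid

theorem box_restricted_permutations_eq_sq_grid_matchings_general
    (n : ℕ)
    (G : SimpleGraph ↥(box2 n n))
    (hG : ∀ x y : ↥(box2 n n), G.Adj x y ↔
      |x.val.1 - y.val.1| + |x.val.2 - y.val.2| = 1) :
    Piplus n =
      (Set.ncard {M : Set (Sym2 ↥(box2 n n)) | IsPerfectMatching G M}) ^ 2 := by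
  have hrestricted : {g : Equiv.Perm ↥(box2 n n) | ∀ x, (g x).val - x.val ∈ A_plus} =
      {g | ∀ x, G.Adj x (g x)} := by
    simp only [adj_iff_sub_mem_A_plus hG]
  rw [Piplus, hrestricted]
  exact ncard_adjPerms_eq_ncard_perfectMatchings_sq (parityColoring hG)

/-- for every `n ≥ 1`, the number of `A_+`-restricted permutations of the
box `{0,…,n−1}²` equals the square of the number of perfect matchings of the `n×n`
grid graph. -/
theorem box_restricted_permutations_eq_sq_grid_matchings
    (n : ℕ) (hn : 1 ≤ n)
    (G : SimpleGraph ↥(box2 n n))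
    (hG : ∀ x y : ↥(box2 n n), G.Adj x y ↔
      |x.val.1 - y.val.1| + |x.val.2 - y.val.2| = 1) :
    Piplus n =
      (Set.ncard {M : Set (Sym2 ↥(box2 n n)) | IsPerfectMatching G M}) ^ 2 :=
  box_restricted_permutations_eq_sq_grid_matchings_general n G hG
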